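/- arXiv:1803.04047 — 4 statements merged into one kernel-verified Lean document; each statement's English description precedes it below -/
import Mathlib

section
/- Let p be an odd prime, G a finite p-group, and σ an automorphism of G with σ² = id. Define X(G,σ) = {s ∈ G : σ(s) = s⁻¹} and Y(G,σ) = {s ∈ G : σ(s) = s}. Then |G| = |X(G,σ)| · |Y(G,σ)|. -/
/-- For an odd prime `p`, a finite `p`-group `G` and an automorphism `σ` with `σ² = 1`,
we have `|G| = |X(G,σ)| · |Y(G,σ)|` where `X` is the set of inverted elements and `Y`
the set of fixed elements. -/
theorem stmt1 (p : ℕ) (hp : p.Prime) (hodd : Odd p)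
    (G : Type) [Group G] [Finite G] (hG : IsPGroup p G)
    (σ : MulAut G) (hσ : σ * σ = 1) :
    Nat.card G = Nat.card {s : G // σ s = s⁻¹} * Nat.card {s : G // σ s = s} := by
  have hσσ : ∀ g : G, σ (σ g) = g := fun g => by
    have := congrArg (fun f : MulAut G => f g) hσ
    simpa using this
  have hn : Odd (Nat.card G) := by
    have : Fact p.Prime := ⟨hp⟩
    obtain ⟨k, hk⟩ := IsPGroup.exists_card_eq hG
    rw [hk]; exact hodd.pow
  obtain ⟨m, hm⟩ := hn
  have hpow : ∀ g : G, g ^ (2 * m + 1) = 1 := fun g => by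
    rw [← hm]; exact pow_card_eq_one'
  -- membership lemmas
  have hXmem : ∀ s : G, σ (σ s * s⁻¹) = (σ s * s⁻¹)⁻¹ := fun s => by
    rw [map_mul, map_inv, hσσ, mul_inv_rev, inv_inv]
  have key : ∀ x : G, σ x = x⁻¹ → x ^ (m + 1) = (x ^ m)⁻¹ := by
    intro x _
    rw [eq_inv_iff_mul_eq_one, ← pow_add]
    have : m + 1 + m = 2 * m + 1 := by ring
    rw [this]; exact hpow x
  have hYmem : ∀ s : G, σ ((σ s * s⁻¹) ^ m)⁻¹ = (σ s * s⁻¹) ^ m * s * s⁻¹ := fun s => by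
    rw [map_inv, map_pow, hXmem, inv_pow, inv_inv, mul_inv_cancel_right]
  rw [← Nat.card_prod]
  apply Nat.card_congr
  refine
    { toFun := fun s =>
        (⟨σ s * s⁻¹, hXmem s⟩,
         ⟨((σ s * s⁻¹) ^ m)⁻¹ * s, ?_⟩)
      invFun := fun xy => (xy.1.1) ^ m * xy.2.1
      left_inv := fun s => by simp
      right_inv := fun xy => ?_ }
  · set x := σ s * s⁻¹ with hx
    have hσs : σ s = x * s := by rw [hx, inv_mul_cancel_right]
    rw [map_mul, map_inv, map_pow, hXmem, inv_pow, inv_inv, hσs, mul_inv_cancel_right,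
      ← mul_assoc, ← pow_succ, key x (hXmem s)]
  · obtain ⟨⟨x, hX⟩, ⟨y, hY⟩⟩ := xy
    have h1 : σ (x ^ m * y) * (x ^ m * y)⁻¹ = x := by
      have h2 : (x ^ (2 * m))⁻¹ = x := by
        have := hpow x
        rw [pow_succ] at this
        exact inv_eq_of_mul_eq_one_right this
      rw [map_mul, map_pow, hX, hY, inv_pow, mul_inv_rev, mul_assoc, mul_inv_cancel_left,
        ← mul_inv_rev, ← pow_add, show m + m = 2 * m by ring, h2]
    ext
    · exact h1
    · simp only [h1]
      rw [inv_mul_cancel_left]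
end

section
/- Let p be an odd prime, and let 1 → K → G → H → 1 be a short exact sequence of finite p-groups equipped with automorphisms σ of order dividing 2 such that the maps are σ-equivariant. Then the induced map Y(G,σ) → Y(H,σ) on fixed-point sets is surjective, and consequently |Y(G,σ)| = |Y(K,σ)| · |Y(H,σ)|. -/
/-- For a σ-equivariant short exact sequence `1 → K → G → H → 1` of finite `p`-groups
(`p` odd) with involutive automorphisms, the induced map on fixed-point sets
`Y(G,σ) → Y(H,σ)` is surjective and `|Y(G,σ)| = |Y(K,σ)| · |Y(H,σ)|`. -/
theorem stmt2 (p : ℕ) (hp : p.Prime) (hodd : Odd p)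
    (K G H : Type) [Group K] [Group G] [Group H] [Finite K] [Finite G] [Finite H]
    (hKp : IsPGroup p K) (hGp : IsPGroup p G) (hHp : IsPGroup p H)
    (f : K →* G) (g : G →* H) (hf : Function.Injective f) (hg : Function.Surjective g)
    (hexact : f.range = g.ker)
    (σK : MulAut K) (σG : MulAut G) (σH : MulAut H)
    (hσK : σK * σK = 1) (hσG : σG * σG = 1) (hσH : σH * σH = 1)
    (heqf : ∀ k : K, f (σK k) = σG (f k)) (heqg : ∀ x : G, g (σG x) = σH (g x)) :
    (∀ h : H, σH h = h → ∃ x : G, σG x = x ∧ g x = h) ∧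
      Nat.card {x : G // σG x = x} =
        Nat.card {k : K // σK k = k} * Nat.card {h : H // σH h = h} := by
  have hσG2 : ∀ x : G, σG (σG x) = x := by
    intro x
    have := congrArg (fun φ : MulAut G => φ x) hσG
    simpa [MulAut.mul_apply] using this
  have surj : ∀ h : H, σH h = h → ∃ x : G, σG x = x ∧ g x = h := by
    intro h hh
    obtain ⟨x, hx⟩ := hg h
    set a : G := x⁻¹ * σG x with ha
    have hσa : σG a = a⁻¹ := by
      simp [ha, map_mul, map_inv, hσG2, mul_inv_rev]
    -- order of a is odd
    obtain ⟨k, hk⟩ := hGp a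
    have hdvd : orderOf a ∣ p ^ k := orderOf_dvd_of_pow_eq_one hk
    have hOddn : Odd (orderOf a) := by
      rcases Nat.even_or_odd (orderOf a) with he | ho
      · exfalso
        have h2 : 2 ∣ p ^ k := dvd_trans he.two_dvd hdvd
        have h2p : 2 ∣ p := Nat.Prime.dvd_of_dvd_pow Nat.prime_two h2
        have := Nat.odd_iff.mp hodd
        omega
      · exact ho
    set n := orderOf a with hn
    set m := (n + 1) / 2 with hm
    have h2m : 2 * m = n + 1 := by
      obtain ⟨t, ht⟩ := hOddn
      omega
    set b : G := a ^ m with hb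
    have hb2 : b * b = a := by
      rw [hb, ← pow_add]
      have : m + m = n + 1 := by omega
      rw [this, pow_succ, hn, pow_orderOf_eq_one, one_mul]
    have hσb : σG b = b⁻¹ := by
      rw [hb, map_pow, hσa, inv_pow]
    have hσx : σG x = x * a := by
      rw [ha, ← mul_assoc, mul_inv_cancel, one_mul]
    refine ⟨x * b, ?_, ?_⟩
    · rw [map_mul, hσx, hσb, mul_assoc, ← hb2]
      group
    · have hga : g a = 1 := by
        rw [ha, map_mul, map_inv, heqg, hx, hh, inv_mul_cancel]
      rw [map_mul, hb, map_pow, hga, one_pow, mul_one, hx]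
  refine ⟨surj, ?_⟩
  choose s hs1 hs2 using surj
  have hgf : ∀ k : K, g (f k) = 1 := by
    intro k
    have : f k ∈ g.ker := hexact ▸ ⟨k, rfl⟩
    exact this
  let Φ : {k : K // σK k = k} × {h : H // σH h = h} → {x : G // σG x = x} :=
    fun kh => ⟨s kh.2.1 kh.2.2 * f kh.1.1, by
      rw [map_mul, hs1, ← heqf, kh.1.2]⟩
  have hΦbij : Function.Bijective Φ := by
    constructor
    · rintro ⟨⟨k1, hk1⟩, ⟨h1, hh1⟩⟩ ⟨⟨k2, hk2⟩, ⟨h2, hh2⟩⟩ heq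
      have heq' : s h1 hh1 * f k1 = s h2 hh2 * f k2 := congrArg Subtype.val heq
      have hH12 : h1 = h2 := by
        have := congrArg g heq'
        rw [map_mul, map_mul, hgf, hgf, mul_one, mul_one, hs2, hs2] at this
        exact this
      subst hH12
      have : f k1 = f k2 := by
        exact mul_left_cancel heq'
      have := hf this
      simp [this]
    · rintro ⟨x, hx⟩
      set h := g x with hh'
      have hh : σH h = h := by rw [hh', ← heqg, hx]
      have hker : (s h hh)⁻¹ * x ∈ g.ker := by
        have : g ((s h hh)⁻¹ * x) = 1 := by
          rw [map_mul, map_inv, hs2, ← hh', inv_mul_cancel]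
        exact this
      obtain ⟨k, hk⟩ : (s h hh)⁻¹ * x ∈ f.range := hexact ▸ hker
      have hkfix : σK k = k := by
        apply hf
        rw [heqf, hk, map_mul, map_inv, hs1, hx]
      refine ⟨⟨⟨k, hkfix⟩, ⟨h, hh⟩⟩, ?_⟩
      apply Subtype.ext
      show s h hh * f k = x
      rw [hk, ← mul_assoc, mul_inv_cancel, one_mul]
  calc Nat.card {x : G // σG x = x}
      = Nat.card ({k : K // σK k = k} × {h : H // σH h = h}) :=
        (Nat.card_congr (Equiv.ofBijective Φ hΦbij)).symm
    _ = Nat.card {k : K // σK k = k} * Nat.card {h : H // σH h = h} :=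
        Nat.card_prod _ _
end

section
/- Let p be an odd prime, and let 1 → K → G → H → 1 be a σ-equivariant short exact sequence of finite p-groups where each group carries an automorphism σ of order dividing 2. Then |X(G,σ)| = |X(K,σ)| · |X(H,σ)|, where X(·,σ) denotes the set of elements inverted by σ. -/
/-- The subgroup of fixed points of an automorphism. -/
def fixedSubgroup {G : Type} [Group G] (σ : MulAut G) : Subgroup G where
  carrier := {x | σ x = x}
  one_mem' := map_one σ
  mul_mem' := fun {a b} ha hb => by
    simp only [Set.mem_setOf_eq] at *
    rw [map_mul, ha, hb]
  inv_mem' := fun {a} ha => by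
    simp only [Set.mem_setOf_eq] at *
    rw [map_inv, ha]

lemma mem_fixedSubgroup {G : Type} [Group G] (σ : MulAut G) (x : G) :
    x ∈ fixedSubgroup σ ↔ σ x = x := Iff.rfl

/-- For a finite group of odd order with an involutive automorphism,
`|X| * |Y| = |G|` where `X` is the set of inverted elements and `Y` the fixed subgroup. -/
theorem card_inverted_mul_card_fixed {G : Type} [Group G] [Finite G]
    (hodd : Odd (Nat.card G)) (σ : MulAut G) (hσ : ∀ x, σ (σ x) = x) :
    Nat.card {x : G // σ x = x⁻¹} * Nat.card (fixedSubgroup σ) = Nat.card G := by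
  classical
  set Y := fixedSubgroup σ with hY
  have hφmem : ∀ s : G, σ (σ s * s⁻¹) = (σ s * s⁻¹)⁻¹ := fun s => by
    rw [map_mul, map_inv, hσ, mul_inv_rev, inv_inv]
  let φ : G → {x : G // σ x = x⁻¹} := fun s => ⟨σ s * s⁻¹, hφmem s⟩
  have key : ∀ a b : G, φ a = φ b ↔ a⁻¹ * b ∈ Y := by
    intro a b
    rw [Subtype.ext_iff]
    show σ a * a⁻¹ = σ b * b⁻¹ ↔ _
    rw [mem_fixedSubgroup, map_mul, map_inv]
    constructor
    · intro h
      have h2 := congrArg (fun z => (σ a)⁻¹ * z * b) h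
      simp only [mul_assoc, inv_mul_cancel_left, inv_mul_cancel, mul_one] at h2
      exact h2.symm
    · intro h
      have h2 := congrArg (fun z => σ a * z * b⁻¹) h
      simp only [mul_assoc, mul_inv_cancel_left, mul_inv_cancel, mul_one] at h2
      exact h2.symm
  let ψ : G ⧸ Y → {x : G // σ x = x⁻¹} := fun q =>
    Quotient.liftOn' q φ (fun a b hab => by
      rw [key]
      exact (QuotientGroup.leftRel_apply).mp hab)
  have hinj : Function.Injective ψ := by
    intro q1 q2
    induction q1 using Quotient.inductionOn'
    induction q2 using Quotient.inductionOn'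
    intro h
    exact Quotient.sound' (QuotientGroup.leftRel_apply.mpr ((key _ _).mp h))
  have hsurj : Function.Surjective ψ := by
    rintro ⟨x, hx⟩
    obtain ⟨t, ht⟩ := hodd
    set m := (Nat.card G + 1) / 2 with hm
    have hmm : m + m = Nat.card G + 1 := by omega
    refine ⟨Quotient.mk'' (x⁻¹ ^ m), ?_⟩
    show φ (x⁻¹ ^ m) = ⟨x, hx⟩
    apply Subtype.ext
    show σ (x⁻¹ ^ m) * (x⁻¹ ^ m)⁻¹ = x
    rw [map_pow, map_inv, hx, inv_inv, inv_pow, inv_inv, ← pow_add, hmm,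
      pow_succ, pow_card_eq_one', one_mul]
  have hcardX : Nat.card (G ⧸ Y) = Nat.card {x : G // σ x = x⁻¹} :=
    Nat.card_congr (Equiv.ofBijective ψ ⟨hinj, hsurj⟩)
  rw [Subgroup.card_eq_card_quotient_mul_card_subgroup Y, hcardX]

/-- For a σ-equivariant short exact sequence `1 → K → G → H → 1` of finite `p`-groups
(`p` odd) with involutive automorphisms, `|X(G,σ)| = |X(K,σ)| · |X(H,σ)|`, where
`X(·,σ)` denotes the set of elements inverted by `σ`. -/
theorem stmt3 (p : ℕ) (hp : p.Prime) (hodd : Odd p)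
    (K G H : Type) [Group K] [Group G] [Group H] [Finite K] [Finite G] [Finite H]
    (hKp : IsPGroup p K) (hGp : IsPGroup p G) (hHp : IsPGroup p H)
    (f : K →* G) (g : G →* H) (hf : Function.Injective f) (hg : Function.Surjective g)
    (hexact : f.range = g.ker)
    (σK : MulAut K) (σG : MulAut G) (σH : MulAut H)
    (hσK : σK * σK = 1) (hσG : σG * σG = 1) (hσH : σH * σH = 1)
    (heqf : ∀ k : K, f (σK k) = σG (f k)) (heqg : ∀ x : G, g (σG x) = σH (g x)) :
    Nat.card {x : G // σG x = x⁻¹} =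
      Nat.card {k : K // σK k = k⁻¹} * Nat.card {h : H // σH h = h⁻¹} := by
  classical
  haveI : Fact p.Prime := ⟨hp⟩
  have hσK2 : ∀ x, σK (σK x) = x := fun x => by
    have := congrArg (fun τ : MulAut K => τ x) hσK; simpa using this
  have hσG2 : ∀ x, σG (σG x) = x := fun x => by
    have := congrArg (fun τ : MulAut G => τ x) hσG; simpa using this
  have hσH2 : ∀ x, σH (σH x) = x := fun x => by
    have := congrArg (fun τ : MulAut H => τ x) hσH; simpa using this
  have hoddA : ∀ (A : Type) [Group A] [Finite A], IsPGroup p A → Odd (Nat.card A) := by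
    intro A _ _ hA
    obtain ⟨n, hn⟩ := IsPGroup.iff_card.mp hA
    rw [hn]; exact hodd.pow
  have hK1 := card_inverted_mul_card_fixed (hoddA K hKp) σK hσK2
  have hG1 := card_inverted_mul_card_fixed (hoddA G hGp) σG hσG2
  have hH1 := card_inverted_mul_card_fixed (hoddA H hHp) σH hσH2
  -- |G| = |H| * |K|
  have hGKH : Nat.card G = Nat.card H * Nat.card K := by
    rw [Subgroup.card_eq_card_quotient_mul_card_subgroup g.ker]
    congr 1
    · exact Nat.card_congr (QuotientGroup.quotientKerEquivOfSurjective g hg).toEquiv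
    · rw [← hexact]
      exact (Nat.card_congr (MonoidHom.ofInjective hf).toEquiv).symm
  -- the restricted hom between fixed subgroups
  let g' : fixedSubgroup σG →* fixedSubgroup σH :=
    { toFun := fun x => ⟨g x.1, by
        rw [mem_fixedSubgroup, ← heqg, (mem_fixedSubgroup σG x.1).mp x.2]⟩
      map_one' := by simp
      map_mul' := fun a b => by simp }
  have hg'surj : Function.Surjective g' := by
    rintro ⟨h, hh⟩
    obtain ⟨x, hx⟩ := hg h
    have hk : x⁻¹ * σG x ∈ g.ker := by
      rw [MonoidHom.mem_ker, map_mul, map_inv, heqg, hx,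
        (mem_fixedSubgroup σH h).mp hh, inv_mul_cancel]
    rw [← hexact] at hk
    obtain ⟨a, ha⟩ := hk
    have ha' : σK a = a⁻¹ := by
      apply hf
      rw [heqf, ha, map_inv, ha, map_mul, map_inv, hσG2, mul_inv_rev, inv_inv]
    obtain ⟨t, ht⟩ := hoddA K hKp
    set m := (Nat.card K + 1) / 2 with hm
    have hmm : m + m = Nat.card K + 1 := by omega
    have hb2 : a ^ m * a ^ m = a := by
      rw [← pow_add, hmm, pow_succ, pow_card_eq_one', one_mul]
    have hab : a * (a ^ m)⁻¹ = a ^ m := by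
      have h3 := congrArg (fun z => z * (a ^ m)⁻¹) hb2
      simpa [mul_assoc] using h3.symm
    have hσx : σG x = x * f a := by
      rw [ha, ← mul_assoc, mul_inv_cancel, one_mul]
    have hbfix : σG (x * f (a ^ m)) = x * f (a ^ m) := by
      rw [map_mul, ← heqf, map_pow, ha', inv_pow, hσx, mul_assoc, ← map_mul, hab]
    refine ⟨⟨x * f (a ^ m), hbfix⟩, ?_⟩
    apply Subtype.ext
    show g (x * f (a ^ m)) = h
    have hfb : f (a ^ m) ∈ g.ker := by rw [← hexact]; exact ⟨a ^ m, rfl⟩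
    rw [map_mul, MonoidHom.mem_ker.mp hfb, mul_one, hx]
  -- kernel of g' is equivalent to fixed subgroup of K
  let F : fixedSubgroup σK → g'.ker := fun a =>
    ⟨⟨f a.1, by rw [mem_fixedSubgroup, ← heqf, (mem_fixedSubgroup σK a.1).mp a.2]⟩, by
      rw [MonoidHom.mem_ker]
      apply Subtype.ext
      show g (f a.1) = 1
      have : f a.1 ∈ g.ker := by rw [← hexact]; exact ⟨a.1, rfl⟩
      exact MonoidHom.mem_ker.mp this⟩
  have hFinj : Function.Injective F := by
    rintro ⟨a, _⟩ ⟨b, _⟩ hab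
    have : f a = f b := congrArg (fun z => z.1.1) hab
    exact Subtype.ext (hf this)
  have hFsurj : Function.Surjective F := by
    rintro ⟨⟨y, hyfix⟩, hyker⟩
    have hy1 : g y = 1 := by
      have := congrArg (fun z : fixedSubgroup σH => z.1) (MonoidHom.mem_ker.mp hyker)
      exact this
    have : y ∈ f.range := by rw [hexact]; exact hy1
    obtain ⟨a, ha⟩ := this
    have hafix : σK a = a := by
      apply hf
      rw [heqf, ha, (mem_fixedSubgroup σG y).mp hyfix]
    exact ⟨⟨a, hafix⟩, Subtype.ext (Subtype.ext ha)⟩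
  -- |Y(G)| = |Y(H)| * |Y(K)|
  have hYG : Nat.card (fixedSubgroup σG) =
      Nat.card (fixedSubgroup σH) * Nat.card (fixedSubgroup σK) := by
    rw [Subgroup.card_eq_card_quotient_mul_card_subgroup g'.ker]
    congr 1
    · exact Nat.card_congr (QuotientGroup.quotientKerEquivOfSurjective g' hg'surj).toEquiv
    · exact (Nat.card_congr (Equiv.ofBijective F ⟨hFinj, hFsurj⟩)).symm
  -- final arithmetic
  have hpos : 0 < Nat.card (fixedSubgroup σH) * Nat.card (fixedSubgroup σK) :=
    Nat.mul_pos Nat.card_pos Nat.card_pos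
  apply Nat.eq_of_mul_eq_mul_right hpos
  calc Nat.card {x : G // σG x = x⁻¹} *
        (Nat.card (fixedSubgroup σH) * Nat.card (fixedSubgroup σK))
      = Nat.card {x : G // σG x = x⁻¹} * Nat.card (fixedSubgroup σG) := by rw [hYG]
    _ = Nat.card G := hG1
    _ = Nat.card H * Nat.card K := hGKH
    _ = (Nat.card {h : H // σH h = h⁻¹} * Nat.card (fixedSubgroup σH)) *
        (Nat.card {k : K // σK k = k⁻¹} * Nat.card (fixedSubgroup σK)) := by
        rw [hH1, hK1]
    _ = Nat.card {k : K // σK k = k⁻¹} * Nat.card {h : H // σH h = h⁻¹} *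
        (Nat.card (fixedSubgroup σH) * Nat.card (fixedSubgroup σK)) := by ring
end

section
/- Let p be an odd prime and G a finite abelian p-group of p-class c (i.e., exponent p^c) with generator rank g, and let u be the number of cyclic factors of order strictly less than p^c in the invariant factor decomposition of G. Writing W for the abelianized quotient F^{ab}/P_c, i.e., W = (ℤ/p^c)^g, the number of (g+1)-tuples in Φ(W)^{g+1} generating a fixed subgroup R ≤ W with W/R ≅ G is |Φ(R)|^{g+1} · ∏_{k=1}^{u} (p^{g+1} − p^{u−k}). -/
/-!
A tuple of elements of `Φ(W) = pW` generates `R` exactly when it is an `R`-valued tuple generating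
`R`. Since `R` is killed by `p ^ c`, a subgroup `H ≤ R` with `H + pR = R` is all of `R` (iterate to
`H + p ^ j R = R`), so a tuple generates `R` iff its image spans the `𝔽_p`-space `R / pR`, of
dimension `u`. Reduction `R ^ (g+1) → (R / pR) ^ (g+1)` is a surjective homomorphism with kernel
`(pR) ^ (g+1)`, and `|pR| = |Φ(R)|`, so each spanning tuple mod `p` has `|Φ(R)| ^ (g+1)` lifts.
Finally, `g + 1` vectors span `𝔽_p ^ u` iff the `u` rows of the matrix they form are linearly
independent in `𝔽_p ^ (g+1)`, and there are `∏_{i<u} (p ^ (g+1) - p ^ i)` such row families.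
-/

open Function Module

theorem Fin.prod_univ_eq_prod_Icc_sub {M : Type*} [CommMonoid M] (f : ℕ → M) (u : ℕ) :
    ∏ i : Fin u, f i = ∏ k ∈ Finset.Icc 1 u, f (u - k) := by
  rw [Fin.prod_univ_eq_prod_range]
  refine Finset.prod_nbij' (fun i => u - i) (fun k => u - k) ?_ ?_ ?_ ?_ ?_ <;>
    intro i hi <;> simp only [Finset.mem_range, Finset.mem_Icc] at hi ⊢
  all_goals first | omega | (congr 1; omega)

section SpanningTuples

variable {K : Type*} [Field K]

theorem span_range_eq_top_iff_linearIndependent_swap {ι κ : Type*} [Fintype ι] [Fintype κ]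
    (w : ι → κ → K) :
    Submodule.span K (Set.range w) = ⊤ ↔ LinearIndependent K (swap w) := by
  have hrank : finrank K (Submodule.span K (Set.range w)) =
      Set.finrank K (Set.range (swap w)) :=
    (Matrix.rank_eq_finrank_span_cols (Matrix.of (swap w))).symm.trans
      (Matrix.rank_eq_finrank_span_row (Matrix.of (swap w)))
  rw [linearIndependent_iff_card_eq_finrank_span, ← hrank, ← finrank_fintype_fun_eq_card (R := K)]
  exact ⟨fun h => by rw [h, finrank_top], fun h => Submodule.eq_top_of_finrank_eq h.symm⟩

variable [Fintype K] {V : Type*} [AddCommGroup V] [Module K V] [FiniteDimensional K V]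

theorem card_span_range_eq_top (n : ℕ) :
    Nat.card {w : Fin n → V // Submodule.span K (Set.range w) = ⊤} =
      ∏ i : Fin (finrank K V), (Fintype.card K ^ n - Fintype.card K ^ (i : ℕ)) := by
  set u := finrank K V
  let e := (Module.finBasis K V).equivFun
  have hspan (w : Fin n → V) : Submodule.span K (Set.range (e ∘ w)) = ⊤ ↔
      Submodule.span K (Set.range w) = ⊤ := by
    rw [Set.range_comp, Submodule.span_image_linearEquiv, Submodule.map_eq_top_iff]
  have ecard : {w : Fin n → V // Submodule.span K (Set.range w) = ⊤} ≃
      {s : Fin u → Fin n → K // LinearIndependent K s} :=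
    Equiv.subtypeEquiv ((Equiv.piCongrRight fun _ => e.toEquiv).trans (Equiv.piComm _))
      fun w => by rw [← hspan, span_range_eq_top_iff_linearIndependent_swap]; rfl
  rw [Nat.card_congr ecard]
  by_cases hun : u ≤ n
  · simpa using card_linearIndependent (K := K) (V := Fin n → K) (by simpa using hun)
  · have : IsEmpty {s : Fin u → Fin n → K // LinearIndependent K s} :=
      ⟨fun s => hun (by simpa using s.2.fintype_card_le_finrank)⟩
    rw [Nat.card_of_isEmpty, eq_comm]
    exact Finset.prod_eq_zero (Finset.mem_univ ⟨n, by omega⟩) (Nat.sub_self _)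

end SpanningTuples

theorem card_span_range_eq_top_of_card_eq_pow {p u : ℕ} [Fact p.Prime] {V : Type*}
    [AddCommGroup V] [Module (ZMod p) V] [Finite V] (hV : Nat.card V = p ^ u) (n : ℕ) :
    Nat.card {w : Fin n → V // Submodule.span (ZMod p) (Set.range w) = ⊤} =
      ∏ i : Fin u, (p ^ n - p ^ (i : ℕ)) := by
  rw [Module.natCard_eq_pow_finrank (K := ZMod p), Nat.card_zmod] at hV
  rw [card_span_range_eq_top, ZMod.card, Nat.pow_right_injective (Fact.out : p.Prime).two_le hV]

section GeneratingTuples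

variable {A : Type*} [AddCommGroup A]

theorem AddSubgroup.closure_eq_top_iff_span_eq_top (n : ℕ) [Module (ZMod n) A] (s : Set A) :
    AddSubgroup.closure s = ⊤ ↔ Submodule.span (ZMod n) s = ⊤ := by
  have : AddSubgroup.closure s = (Submodule.span (ZMod n) s).toAddSubgroup :=
    le_antisymm ((AddSubgroup.closure_le _).2 Submodule.subset_span)
      (Submodule.span_le (p := AddSubgroup.toZModSubmodule n (AddSubgroup.closure s)) |>.2
        AddSubgroup.subset_closure)
  rw [this, Submodule.toAddSubgroup_eq_top]

theorem AddSubgroup.closure_range_subtype_eq_iff {ι : Type*} (H : AddSubgroup A) (w : ι → H) :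
    AddSubgroup.closure (Set.range fun i => (w i : A)) = H ↔
      AddSubgroup.closure (Set.range w) = ⊤ := by
  have hmap : (AddSubgroup.closure (Set.range w)).map H.subtype =
      AddSubgroup.closure (Set.range fun i => (w i : A)) := by
    rw [AddMonoidHom.map_closure, ← Set.range_comp]; rfl
  have htop : (⊤ : AddSubgroup H).map H.subtype = H := by
    rw [← AddMonoidHom.range_eq_map, AddSubgroup.range_subtype]
  rw [← hmap]
  exact (AddSubgroup.map_injective H.subtype_injective).eq_iff' htop

theorem card_closure_range_eq_subgroup {ι : Type*} (H : AddSubgroup A) :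
    Nat.card {v : ι → A // AddSubgroup.closure (Set.range v) = H} =
      Nat.card {w : ι → H // AddSubgroup.closure (Set.range w) = ⊤} := by
  have hmem (v : ι → A) (hv : AddSubgroup.closure (Set.range v) = H) (i : ι) : v i ∈ H :=
    hv ▸ AddSubgroup.subset_closure (Set.mem_range_self i)
  refine Nat.card_congr
    { toFun v := ⟨fun i => ⟨v.1 i, hmem v.1 v.2 i⟩, (H.closure_range_subtype_eq_iff _).1 v.2⟩
      invFun w := ⟨fun i => w.1 i, (H.closure_range_subtype_eq_iff _).2 w.2⟩
      left_inv _ := rfl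
      right_inv _ := rfl }

theorem AddSubgroup.card_range_nsmul (H : AddSubgroup A) (n : ℕ) :
    Nat.card (nsmulAddMonoidHom n : H →+ H).range = Nat.card (H.map (nsmulAddMonoidHom n)) := by
  have : (nsmulAddMonoidHom n : H →+ H).range.map H.subtype = H.map (nsmulAddMonoidHom n) := by
    rw [← AddMonoidHom.range_comp,
      show H.subtype.comp (nsmulAddMonoidHom n) = (nsmulAddMonoidHom n).comp H.subtype from rfl,
      AddMonoidHom.range_comp, AddSubgroup.range_subtype]
  rw [← this, AddSubgroup.card_map_of_injective H.subtype_injective]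

theorem AddSubgroup.eq_top_of_map_mk_range_nsmul_eq_top {p c : ℕ} (hA : ∀ x : A, p ^ c • x = 0)
    {H : AddSubgroup A}
    (hH : H.map (QuotientAddGroup.mk' (nsmulAddMonoidHom p : A →+ A).range) = ⊤) : H = ⊤ := by
  have hstep (x : A) : ∃ m ∈ H, ∃ t : A, x = m + p • t := by
    obtain ⟨m, hm, hmx⟩ := hH.ge (AddSubgroup.mem_top (x : A ⧸ _))
    obtain ⟨t, ht⟩ := QuotientAddGroup.eq_iff_sub_mem.1 hmx.symm
    exact ⟨m, hm, t, by rw [nsmulAddMonoidHom_apply] at ht; rw [ht]; abel⟩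
  have hdescent (j : ℕ) (x : A) : ∃ y, x - p ^ j • y ∈ H := by
    induction j generalizing x with
    | zero => exact ⟨x, by simp⟩
    | succ j ih =>
      obtain ⟨m, hm, t, rfl⟩ := hstep x
      obtain ⟨y, hy⟩ := ih t
      refine ⟨y, ?_⟩
      have : m + p • t - p ^ (j + 1) • y = m + p • (t - p ^ j • y) := by
        rw [smul_sub, ← mul_smul, ← pow_succ']; abel
      rw [this]
      exact H.add_mem hm (H.nsmul_mem hy p)
  refine eq_top_iff.2 fun x _ => ?_
  obtain ⟨y, hy⟩ := hdescent c x
  rwa [hA, sub_zero] at hy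

theorem AddMonoidHom.card_subtype_comp_eq {B : Type*} [AddCommGroup B] (f : A →+ B)
    (hf : Surjective f) (P : B → Prop) :
    Nat.card {a // P (f a)} = Nat.card {b // P b} * Nat.card f.ker := by
  let e := QuotientAddGroup.quotientKerEquivOfSurjective f hf
  rw [← Nat.card_prod]
  exact Nat.card_congr <|
    (QuotientAddGroup.preimageMkEquivAddSubgroupProdSet f.ker {q | P (e q)}).trans <|
      (Equiv.prodComm _ _).trans <|
        Equiv.prodCongrLeft fun _ => e.toEquiv.subtypeEquiv fun _ => .rfl

theorem AddMonoidHom.card_ker_compLeft {B : Type*} [AddCommGroup B] (f : A →+ B) (ι : Type*)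
    [Finite ι] : Nat.card (f.compLeft ι).ker = Nat.card f.ker ^ Nat.card ι := by
  have hker : (f.compLeft ι).ker ≃ (ι → f.ker) :=
    (Equiv.subtypeEquivRight fun w => by simp [AddMonoidHom.mem_ker, funext_iff]).trans
      (Equiv.subtypePiEquivPi (p := fun _ a => a ∈ f.ker))
  rw [Nat.card_congr hker, Nat.card_fun]

theorem card_closure_range_eq_top {p c u : ℕ} [Fact p.Prime] [Finite A]
    (hA : ∀ x : A, p ^ c • x = 0)
    (hu : Nat.card (A ⧸ (nsmulAddMonoidHom p : A →+ A).range) = p ^ u) (n : ℕ) :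
    Nat.card {w : Fin n → A // AddSubgroup.closure (Set.range w) = ⊤} =
      (∏ i : Fin u, (p ^ n - p ^ (i : ℕ))) * Nat.card (nsmulAddMonoidHom p : A →+ A).range ^ n := by
  set S := (nsmulAddMonoidHom p : A →+ A).range
  let _ : Module (ZMod p) (A ⧸ S) := QuotientAddGroup.zmodModule fun x => ⟨x, rfl⟩
  have : Finite (A ⧸ S) := Quotient.finite _
  let π := (QuotientAddGroup.mk' S).compLeft (Fin n)
  have hgen (w : Fin n → A) :
      AddSubgroup.closure (Set.range w) = ⊤ ↔ AddSubgroup.closure (Set.range (π w)) = ⊤ := by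
    rw [show π w = QuotientAddGroup.mk' S ∘ w from rfl, Set.range_comp,
      ← AddMonoidHom.map_closure]
    refine ⟨fun h => ?_, AddSubgroup.eq_top_of_map_mk_range_nsmul_eq_top hA⟩
    rw [h, ← AddMonoidHom.range_eq_map, AddMonoidHom.range_eq_top]
    exact QuotientAddGroup.mk'_surjective S
  calc Nat.card {w : Fin n → A // AddSubgroup.closure (Set.range w) = ⊤}
      = Nat.card {w : Fin n → A // AddSubgroup.closure (Set.range (π w)) = ⊤} := by
        simp_rw [hgen]
    _ = Nat.card {v : Fin n → A ⧸ S // AddSubgroup.closure (Set.range v) = ⊤} *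
          Nat.card π.ker :=
        π.card_subtype_comp_eq (QuotientAddGroup.mk'_surjective S).comp_left
          (fun v => AddSubgroup.closure (Set.range v) = ⊤)
    _ = _ := by
      simp_rw [AddSubgroup.closure_eq_top_iff_span_eq_top p]
      rw [card_span_range_eq_top_of_card_eq_pow hu, AddMonoidHom.card_ker_compLeft,
        QuotientAddGroup.ker_mk', Nat.card_fin]

end GeneratingTuples

theorem stmt12_general (p g c u : ℕ) (hp : p.Prime)
    (R : AddSubgroup (Fin g → ZMod (p ^ c)))
    (hR : R ≤ AddSubgroup.map (nsmulAddMonoidHom p : (Fin g → ZMod (p ^ c)) →+ _) ⊤)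
    (hu : Nat.card R =
      Nat.card (AddSubgroup.map (nsmulAddMonoidHom p : (Fin g → ZMod (p ^ c)) →+ _) R) * p ^ u) :
    Nat.card {v : Fin (g + 1) → (Fin g → ZMod (p ^ c)) //
        (∀ i, v i ∈ AddSubgroup.map (nsmulAddMonoidHom p : (Fin g → ZMod (p ^ c)) →+ _) ⊤) ∧
        AddSubgroup.closure (Set.range v) = R} =
      Nat.card (AddSubgroup.map (nsmulAddMonoidHom p : (Fin g → ZMod (p ^ c)) →+ _) R) ^ (g + 1) *
        ∏ k ∈ Finset.Icc 1 u, (p ^ (g + 1) - p ^ (u - k)) := by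
  have := Fact.mk hp
  have hpR := R.card_range_nsmul p
  have hquot : Nat.card (R ⧸ (nsmulAddMonoidHom p : R →+ R).range) = p ^ u := by
    have hcard := AddSubgroup.card_eq_card_quotient_mul_card_addSubgroup
      (nsmulAddMonoidHom p : R →+ R).range
    rw [hu, hpR, mul_comm] at hcard
    exact (Nat.eq_of_mul_eq_mul_right Nat.card_pos hcard).symm
  have hpc (x : R) : p ^ c • x = 0 :=
    Subtype.ext <| funext fun i => by simp [nsmul_eq_mul]
  have hPhi : {v : Fin (g + 1) → (Fin g → ZMod (p ^ c)) //
        (∀ i, v i ∈ AddSubgroup.map (nsmulAddMonoidHom p : (Fin g → ZMod (p ^ c)) →+ _) ⊤) ∧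
        AddSubgroup.closure (Set.range v) = R} ≃
      {v : Fin (g + 1) → (Fin g → ZMod (p ^ c)) // AddSubgroup.closure (Set.range v) = R} :=
    Equiv.subtypeEquivRight fun v => and_iff_right_of_imp fun hv i =>
      hR (hv ▸ AddSubgroup.subset_closure (Set.mem_range_self i))
  rw [Nat.card_congr hPhi, card_closure_range_eq_subgroup, card_closure_range_eq_top hpc hquot, hpR,
    Fin.prod_univ_eq_prod_Icc_sub (fun i => p ^ (g + 1) - p ^ i), mul_comm]

/-- Counting tuples of relations in the abelian setting: for `W = (ℤ/p^c)^g` with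
Frattini subgroup `Φ(W) = pW`, a finite abelian `p`-group `G ≅ W/R` of exponent
exactly `p^c` with `R ≤ Φ(W)`, and `u = dim_{𝔽_p} R/pR`, the number of
`(g+1)`-tuples in `Φ(W)^{g+1}` generating `R` equals
`|Φ(R)|^{g+1} · ∏_{k=1}^{u} (p^{g+1} − p^{u−k})`. -/
theorem stmt12 (p g c u : ℕ) (hp : p.Prime) (hodd : Odd p) (hc : 1 ≤ c) (hg : 1 ≤ g)
    (G : Type) [AddCommGroup G] [Finite G]
    (R : AddSubgroup (Fin g → ZMod (p ^ c)))
    (hR : R ≤ AddSubgroup.map (nsmulAddMonoidHom p : (Fin g → ZMod (p ^ c)) →+ _) ⊤)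
    (hiso : Nonempty (((Fin g → ZMod (p ^ c)) ⧸ R) ≃+ G))
    (hexp : AddMonoid.exponent G = p ^ c)
    (hu : Nat.card R =
      Nat.card (AddSubgroup.map (nsmulAddMonoidHom p : (Fin g → ZMod (p ^ c)) →+ _) R) * p ^ u) :
    Nat.card {v : Fin (g + 1) → (Fin g → ZMod (p ^ c)) //
        (∀ i, v i ∈ AddSubgroup.map (nsmulAddMonoidHom p : (Fin g → ZMod (p ^ c)) →+ _) ⊤) ∧
        AddSubgroup.closure (Set.range v) = R} =
      Nat.card (AddSubgroup.map (nsmulAddMonoidHom p : (Fin g → ZMod (p ^ c)) →+ _) R) ^ (g + 1) *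
        ∏ k ∈ Finset.Icc 1 u, (p ^ (g + 1) - p ^ (u - k)) :=
  stmt12_general p g c u hp R hR hu
end
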